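/- arXiv:1905.13645 — 5 statements merged into one kernel-verified Lean document; each statement's English description precedes it below -/
import Mathlib

section
/- Assume u > εκ/(δγa), yⁿ = ((ε-1)/ε)(a/κ) with ε > 1, a > 0, κ > 0, γ > 0, and δ > √((ε-1)/γ). Let rⁿ = δ - u yⁿ (taking σ = 0) and suppose rⁿ < 0. Then y^z := yⁿ + rⁿ/(u - εκ/(δγa)) > 0. -/
/-- WUNK model: ZLB steady-state output is strictly positive. -/
theorem stmt_7 (ε κ δ γ a u : ℝ) (hε : 1 < ε) (hκ : 0 < κ) (hδ : 0 < δ)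
    (hγ : 0 < γ) (ha : 0 < a)
    (hu : ε * κ / (δ * γ * a) < u)
    (hδ2 : Real.sqrt ((ε - 1) / γ) < δ)
    (yn : ℝ) (hyn : yn = ((ε - 1) / ε) * (a / κ))
    (rn : ℝ) (hrn : rn = δ - u * yn) (hrneg : rn < 0) :
    0 < yn + rn / (u - ε * κ / (δ * γ * a)) := by
  have hsq : (ε - 1) / γ < δ ^ 2 := (Real.sqrt_lt' hδ).mp hδ2
  have hub : 0 < u - ε * κ / (δ * γ * a) := by linarith
  have hεpos : (0:ℝ) < ε := by linarith
  subst hrn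
  have key : yn + (δ - u * yn) / (u - ε * κ / (δ * γ * a))
      = (yn * (u - ε * κ / (δ * γ * a)) + (δ - u * yn)) / (u - ε * κ / (δ * γ * a)) := by
    rw [add_div, mul_div_cancel_right₀ _ hub.ne']
  have key2 : yn * (u - ε * κ / (δ * γ * a)) + (δ - u * yn)
      = δ - (ε * κ / (δ * γ * a)) * yn := by ring
  rw [key, key2]
  apply div_pos _ hub
  have : (ε * κ / (δ * γ * a)) * yn = (ε - 1) / (δ * γ) := by
    rw [hyn]; field_simp
  have hsq' : ε - 1 < δ ^ 2 * γ := (div_lt_iff₀ hγ).mp hsq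
  rw [this, sub_pos, div_lt_iff₀ (by positivity)]
  nlinarith [hsq']
end

section
/- Let M = [[u c, (φ-1) c], [-(1+η) k ((ε-1)/ε)^(η/(1+η)), δ]] with c > 0, δ > 0, k > 0, η > 0, ε > 1, φ ≥ 0, and u > (1+η)(k/δ)((ε-1)/ε)^(η/(1+η)). Then tr(M) > 0 and det(M) > 0, so both eigenvalues of M have positive real part. -/
/-!
The trace `u c + δ` is positive once `u > 0`, which the WUNK condition forces. Writing
`A = (1 + η) k ((ε - 1) / ε) ^ (η / (1 + η)) ≥ 0`, the WUNK condition reads `A < u δ`, and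
`det M = c (u δ - A) + φ c A > 0`. A real quadratic with positive sum and product of roots
has roots in the open right half-plane.
-/

theorem Complex.re_pos_of_sq_sub_mul_add_eq_zero {T D : ℝ} (hT : 0 < T) (hD : 0 < D)
    {μ : ℂ} (hμ : μ ^ 2 - (T : ℂ) * μ + (D : ℂ) = 0) : 0 < μ.re := by
  have hre := congrArg Complex.re hμ
  have him := congrArg Complex.im hμ
  simp only [pow_two, Complex.add_re, Complex.sub_re, Complex.mul_re, Complex.ofReal_re,
    Complex.ofReal_im, Complex.zero_re, Complex.add_im, Complex.sub_im, Complex.mul_im,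
    Complex.zero_im] at hre him
  have hsplit : μ.im * (2 * μ.re - T) = 0 := by linarith
  rcases mul_eq_zero.mp hsplit with hreal | hconj
  · -- a real root `x` satisfies `x (T - x) = D > 0`, so `x ≤ 0` is impossible
    rw [hreal] at hre
    by_contra! hx
    nlinarith [mul_nonneg (neg_nonneg.mpr hx) hT.le]
  · linarith

/-- WUNK model with government spending, normal times (any φ ≥ 0):
positive trace and determinant, so both eigenvalues have positive
real part (source). -/
theorem stmt_9 (c δ k η ε u φ : ℝ) (hc : 0 < c) (hδ : 0 < δ) (hk : 0 < k)
    (hη : 0 < η) (hε : 1 < ε) (hφ : 0 ≤ φ)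
    (hu : (1 + η) * (k / δ) * ((ε - 1) / ε) ^ (η / (1 + η)) < u) :
    let M : Matrix (Fin 2) (Fin 2) ℝ :=
      !![u * c, (φ - 1) * c; -((1 + η) * k * ((ε - 1) / ε) ^ (η / (1 + η))), δ]
    0 < Matrix.trace M ∧ 0 < M.det ∧
      ∀ μ : ℂ, μ ^ 2 - (Matrix.trace M : ℝ) * μ + (M.det : ℝ) = 0 → 0 < μ.re := by
  intro M
  set A := (1 + η) * k * ((ε - 1) / ε) ^ (η / (1 + η))
  have hA : 0 ≤ A :=
    mul_nonneg (by positivity) (Real.rpow_nonneg (div_nonneg (by linarith) (by linarith)) _)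
  have hu' : A / δ < u := by
    convert hu using 1
    ring
  have hAu : A < u * δ := (div_lt_iff₀ hδ).mp hu'
  have hu0 : 0 < u := (div_nonneg hA hδ.le).trans_lt hu'
  have htr : 0 < M.trace := by
    rw [Matrix.trace_fin_two_of]
    positivity
  have hdet : 0 < M.det := by
    rw [Matrix.det_fin_two_of]
    nlinarith [mul_pos hc (sub_pos.mpr hAu), mul_nonneg (mul_nonneg hφ hc.le) hA]
  exact ⟨htr, hdet, fun μ hμ => Complex.re_pos_of_sq_sub_mul_add_eq_zero htr hdet hμ⟩
end

section
/- Let A = u (δγa/(εκ)) (ε/(ε-1))^(η/(1+η)) - (1+η). Under the WUNK condition with government spending, A > 0, and the steady-state consumption c^g = cⁿ + (rⁿ + (εκ/(δγa))((ε-1)/ε)^(η/(1+η)) η g) / (u - (1+η)(εκ/(δγa))((ε-1)/ε)^(η/(1+η))) is strictly increasing in g, with derivative dc^g/dg = η/A > 0. Hence the government-spending multiplier dy/dg = 1 + η/A exceeds 1. -/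
/-- WUNK model at the ZLB with government spending: A > 0, steady-state
consumption c^g is strictly increasing in g with derivative η/A > 0, and the
government-spending multiplier 1 + η/A exceeds 1. -/
theorem stmt_10 (ε κ δ γ a η u cn rn : ℝ) (hε : 1 < ε) (hκ : 0 < κ)
    (hδ : 0 < δ) (hγ : 0 < γ) (ha : 0 < a) (hη : 0 < η)
    (hu : (1 + η) * (ε * κ / (δ * γ * a)) * ((ε - 1) / ε) ^ (η / (1 + η)) < u) :
    let A := u * (δ * γ * a / (ε * κ)) * (ε / (ε - 1)) ^ (η / (1 + η)) - (1 + η)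
    let cg : ℝ → ℝ := fun g => cn +
      (rn + (ε * κ / (δ * γ * a)) * ((ε - 1) / ε) ^ (η / (1 + η)) * η * g) /
        (u - (1 + η) * (ε * κ / (δ * γ * a)) * ((ε - 1) / ε) ^ (η / (1 + η)))
    0 < A ∧ (∀ g : ℝ, HasDerivAt cg (η / A) g) ∧ 0 < η / A ∧
      StrictMono cg ∧ 1 < 1 + η / A := by
  intro A cg
  have hε0 : (0:ℝ) < ε := by linarith
  have hε1 : (0:ℝ) < ε - 1 := by linarith
  have hP : (0:ℝ) < (ε - 1) / ε := div_pos hε1 hε0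
  have hQ : (0:ℝ) < ε / (ε - 1) := div_pos hε0 hε1
  have hPQ : ((ε - 1) / ε) ^ (η / (1 + η)) * (ε / (ε - 1)) ^ (η / (1 + η)) = 1 := by
    rw [← Real.mul_rpow hP.le hQ.le]
    rw [show (ε - 1) / ε * (ε / (ε - 1)) = 1 by field_simp]
    simp
  have hPx : 0 < ((ε - 1) / ε) ^ (η / (1 + η)) := Real.rpow_pos_of_pos hP _
  have hQx : 0 < (ε / (ε - 1)) ^ (η / (1 + η)) := Real.rpow_pos_of_pos hQ _
  set B := ε * κ / (δ * γ * a) * ((ε - 1) / ε) ^ (η / (1 + η)) with hBdef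
  have hB : 0 < B := by positivity
  have hBinv : B * (δ * γ * a / (ε * κ) * (ε / (ε - 1)) ^ (η / (1 + η))) = 1 := by
    have h2 : ε * κ / (δ * γ * a) * (δ * γ * a / (ε * κ)) = 1 := by
      field_simp
    calc B * (δ * γ * a / (ε * κ) * (ε / (ε - 1)) ^ (η / (1 + η)))
        = (ε * κ / (δ * γ * a) * (δ * γ * a / (ε * κ))) *
          (((ε - 1) / ε) ^ (η / (1 + η)) * (ε / (ε - 1)) ^ (η / (1 + η))) := by
          rw [hBdef]; ring
      _ = 1 := by rw [h2, hPQ, mul_one]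
  have hBA : B * A = u - (1 + η) * B := by
    have h1 : B * A = u * (B * (δ * γ * a / (ε * κ) * (ε / (ε - 1)) ^ (η / (1 + η)))) -
        (1 + η) * B := by
      show B * (u * (δ * γ * a / (ε * κ)) * (ε / (ε - 1)) ^ (η / (1 + η)) - (1 + η)) = _
      ring
    rw [h1, hBinv, mul_one]
  have huB : (1 + η) * B < u := by
    have : (1 + η) * (ε * κ / (δ * γ * a)) * ((ε - 1) / ε) ^ (η / (1 + η)) = (1 + η) * B := by
      rw [hBdef]; ring
    linarith [hu, this ▸ hu]
  have hA : 0 < A := by nlinarith [hBA, hB]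
  have hd : u - (1 + η) * B ≠ 0 := by nlinarith
  have hslope : B * η / (u - (1 + η) * B) = η / A := by
    rw [← hBA]; field_simp
  have hderiv : ∀ g : ℝ, HasDerivAt cg (η / A) g := by
    intro g
    have hcg : cg = fun g => cn + (rn + B * η * g) / (u - (1 + η) * B) := by
      funext g
      simp only [cg, hBdef]; ring_nf
    rw [hcg, ← hslope]
    have h1 : HasDerivAt (fun g : ℝ => rn + B * η * g) (B * η) g := by
      simpa using ((hasDerivAt_id g).const_mul (B * η)).const_add rn
    simpa using ((h1.div_const (u - (1 + η) * B)).const_add cn)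
  have hηA : 0 < η / A := div_pos hη hA
  refine ⟨hA, hderiv, hηA, ?_, by linarith⟩
  exact strictMono_of_deriv_pos (fun g => by rw [(hderiv g).deriv]; exact hηA)
end

section
/- If ŷ(t) = α ŷ(t+1) − [i(t) − rⁿ − α π(t+1)] for all t, with 0 < α < 1 and the sequences bounded, then ŷ(t) = −∑_{k=0}^∞ α^k [i(t+k) − rⁿ − α π(t+k+1)]; in particular current output depends on interest rates k periods ahead with weight α^k, which tends to 0 as k → ∞. -/
/-!
Multiplying the Euler equation at date `t + k` by `αᵏ` turns its forcing term into the
increment `g (k + 1) - g k` of the discounted path `g k = αᵏ ŷ(t + k)`. Since `ŷ` is bounded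
and `|α| < 1`, `g` is summable, so the telescoping series of its increments sums to
`-g 0 = -ŷ(t)`.
-/

open Filter

theorem Summable.hasSum_sub_succ {G : Type*} [AddCommGroup G] [TopologicalSpace G]
    [IsTopologicalAddGroup G] {g : ℕ → G} (hg : Summable g) :
    HasSum (fun n => g (n + 1) - g n) (-g 0) := by
  have hshift : HasSum (fun n => g (n + 1)) (∑' n, g n - g 0) := by
    simpa using (hasSum_nat_add_iff' 1).mpr hg.hasSum
  simpa using hshift.sub hg.hasSum

theorem summable_pow_mul_of_norm_le {R : Type*} [NormedRing R] [NormOneClass R] [CompleteSpace R]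
    {α : R} (hα : ‖α‖ < 1) {y : ℕ → R} {C : ℝ} (hy : ∀ k, ‖y k‖ ≤ C) :
    Summable fun k => α ^ k * y k := by
  refine .of_norm_bounded ((summable_geometric_of_lt_one (norm_nonneg α) hα).mul_right C)
    fun k => ?_
  calc ‖α ^ k * y k‖ ≤ ‖α‖ ^ k * ‖y k‖ :=
        (norm_mul_le _ _).trans (mul_le_mul_of_nonneg_right (norm_pow_le α k) (norm_nonneg _))
    _ ≤ ‖α‖ ^ k * C := by gcongr; exact hy k

theorem stmt_13_general (α rn : ℝ) (hα0 : 0 < α) (hα1 : α < 1)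
    (i π yhat : ℕ → ℝ)
    (hyb : ∃ C, ∀ t, |yhat t| ≤ C)
    (heuler : ∀ t, yhat t = α * yhat (t + 1) - (i t - rn - α * π (t + 1))) :
    (∀ t, yhat t = -∑' k : ℕ, α ^ k * (i (t + k) - rn - α * π (t + k + 1))) ∧
      Tendsto (fun k : ℕ => α ^ k) atTop (nhds 0) := by
  refine ⟨fun t => ?_, tendsto_pow_atTop_nhds_zero_of_lt_one hα0.le hα1⟩
  obtain ⟨C, hC⟩ := hyb
  have hα : ‖α‖ < 1 := by rwa [Real.norm_eq_abs, abs_of_pos hα0]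
  have hdiscounted : Summable fun k => α ^ k * yhat (t + k) :=
    summable_pow_mul_of_norm_le hα fun k => hC (t + k)
  have hincrement : ∀ k, α ^ k * (i (t + k) - rn - α * π (t + k + 1)) =
      α ^ (k + 1) * yhat (t + (k + 1)) - α ^ k * yhat (t + k) := fun k => by
    rw [← add_assoc]
    linear_combination α ^ k * heuler (t + k)
  rw [tsum_congr hincrement, hdiscounted.hasSum_sub_succ.tsum_eq]
  simp

/-- Solving the discounted Euler equation forward: if
ŷ(t) = α ŷ(t+1) − [i(t) − rⁿ − α π(t+1)] with 0 < α < 1 and bounded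
sequences, then ŷ(t) = −∑ₖ αᵏ [i(t+k) − rⁿ − α π(t+k+1)]; the weight αᵏ
tends to 0 as k → ∞. -/
theorem stmt_13 (α rn : ℝ) (hα0 : 0 < α) (hα1 : α < 1)
    (i π yhat : ℕ → ℝ)
    (hib : ∃ C, ∀ t, |i t| ≤ C) (hπb : ∃ C, ∀ t, |π t| ≤ C)
    (hyb : ∃ C, ∀ t, |yhat t| ≤ C)
    (heuler : ∀ t, yhat t = α * yhat (t + 1) - (i t - rn - α * π (t + 1))) :
    (∀ t, yhat t = -∑' k : ℕ, α ^ k * (i (t + k) - rn - α * π (t + k + 1))) ∧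
      Tendsto (fun k : ℕ => α ^ k) atTop (nhds 0) :=
  stmt_13_general α rn hα0 hα1 i π yhat hyb heuler
end

section
/- In the WUNK model, an increase in the marginal utility of wealth u (steepening the Euler line) lowers both steady-state output and inflation at the ZLB: with π^z(u) = rⁿ/(u δγa/(εκ) − 1) and y^z(u) = yⁿ + rⁿ/(u − εκ/(δγa)), and rⁿ(u) = δ − σ − u yⁿ, the ZLB steady-state output determined by solving π = −δ + σ + u y together with π = (εκ/(δγa))(y − yⁿ) is strictly decreasing in u (paradox of thrift). -/
/-- Paradox of thrift: the ZLB steady-state output, i.e. the solution y of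
u y − s (y − yⁿ) = δ − σ with s = εκ/(δγa), is strictly decreasing in the
marginal utility of wealth u (on u > s, given positive steady-state output,
i.e. δ − σ − s yⁿ > 0). -/
theorem stmt_14 (ε κ δ γ a σ yn : ℝ) (hε : 1 < ε) (hκ : 0 < κ) (hδ : 0 < δ)
    (hγ : 0 < γ) (ha : 0 < a) (hσ : 0 ≤ σ) (hyn : 0 < yn)
    (hpos : 0 < δ - σ - (ε * κ / (δ * γ * a)) * yn) :
    let s := ε * κ / (δ * γ * a)
    let y : ℝ → ℝ := fun u => (δ - σ - s * yn) / (u - s)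
    (∀ u, s < u → u * y u - s * (y u - yn) = δ - σ) ∧
      StrictAntiOn y (Set.Ioi s) := by
  intro s y
  constructor
  · intro u hu
    have h : u - s ≠ 0 := by linarith
    show u * ((δ - σ - s * yn) / (u - s)) - s * ((δ - σ - s * yn) / (u - s) - yn) = δ - σ
    field_simp
    ring
  · intro u hu v hv huv
    simp only [Set.mem_Ioi] at hu hv
    show (δ - σ - s * yn) / (v - s) < (δ - σ - s * yn) / (u - s)
    apply div_lt_div_of_pos_left hpos (by linarith) (by linarith)
end
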